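/- arXiv:1803.11183 — 5 statements merged into one kernel-verified Lean document; each statement's English description precedes it below -/
import Mathlib

section
/- Let V be a finite-dimensional vector space over ZMod 2, let B be a nondegenerate symmetric bilinear form on V, and let q be a ℤ/4-quadratic enhancement of B. Then the Gauss sum S(q) = Σ_{x ∈ V} I^{(q x).val} satisfies S(q)^8 = (Fintype.card V)^4; equivalently, the Arf–Brown invariant AB(q) := S(q)/√(Fintype.card V) is an 8th root of unity. -/
/-!
Expanding `S(q)^2 = ∑_{x,s} I^(q x + q (x + s))` and using `q x + q x = ⟨2⟩ B(x,x)`, the sum over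
`x` for fixed `s` becomes the character sum of the linear form `x ↦ B(x,x) + B(s,x)`. Over `𝔽₂` the
diagonal of a symmetric form is linear, so nondegeneracy gives a unique characteristic element `c`
with `B(c,x) = B(x,x)`, and that character sum vanishes unless `s = c`. Hence
`S(q)^2 = |V| · I^(q c)`, and `I^(q c)` is a fourth root of unity.
-/

open Complex

noncomputable def iChar : AddChar (ZMod 4) ℂ := AddChar.zmodChar 4 I_pow_four

noncomputable def signChar : AddChar (ZMod 2) ℂ := AddChar.zmodChar 2 (neg_one_sq (R := ℂ))

lemma iChar_apply (a : ZMod 4) : iChar a = I ^ a.val := rfl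

lemma signChar_apply (b : ZMod 2) : signChar b = (-1) ^ b.val := rfl

lemma iChar_pow_four (a : ZMod 4) : iChar a ^ 4 = 1 := by
  rw [iChar_apply, ← pow_mul, mul_comm, pow_mul, I_pow_four, one_pow]

lemma iChar_two_mul_val (b : ZMod 2) : iChar (2 * (b.val : ZMod 4)) = signChar b := by
  match b with
  | 0 => rfl
  | 1 => exact (I_sq.trans (pow_one _).symm : I ^ 2 = (-1) ^ 1)

lemma signChar_one : signChar 1 = -1 := pow_one _

section

variable {V : Type*} [AddCommGroup V] [Module (ZMod 2) V]

lemma sum_signChar_dual [Fintype V] (φ : Module.Dual (ZMod 2) V) :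
    ∑ x, signChar (φ x) = if φ = 0 then (Fintype.card V : ℂ) else 0 := by
  have hψ : signChar.compAddMonoidHom φ.toAddMonoidHom = 0 ↔ φ = 0 := by
    refine ⟨fun h => LinearMap.ext fun x => ?_, fun h => by subst h; ext; simp⟩
    have hx : signChar (φ x) = 1 := by simpa using DFunLike.congr_fun h x
    by_contra hne
    rw [(by decide : ∀ a : ZMod 2, a ≠ 0 → a = 1) _ hne, signChar_one] at hx
    norm_num at hx
  classical
  simpa only [hψ, AddChar.compAddMonoidHom_apply, LinearMap.toAddMonoidHom_coe] using
    AddChar.sum_eq_ite (signChar.compAddMonoidHom φ.toAddMonoidHom)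

def diagonalDual (B : LinearMap.BilinForm (ZMod 2) V) (hB : ∀ x y, B x y = B y x) :
    Module.Dual (ZMod 2) V where
  toFun x := B x x
  map_add' x y := by
    simp only [map_add, LinearMap.add_apply, hB y x]
    linear_combination ZModModule.add_self (B x y)
  map_smul' r x := by
    obtain rfl | rfl : r = 0 ∨ r = 1 := by decide +revert
    all_goals simp

lemma exists_apply_eq_apply_self (B : LinearMap.BilinForm (ZMod 2) V)
    (hB : ∀ x y, B x y = B y x) (hsurj : Function.Surjective B) : ∃ c, ∀ x, B c x = B x x :=
  let ⟨c, hc⟩ := hsurj (diagonalDual B hB)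
  ⟨c, fun x => LinearMap.congr_fun hc x⟩

def IsQuadraticEnhancement (B : LinearMap.BilinForm (ZMod 2) V) (q : V → ZMod 4) : Prop :=
  ∀ x y, q (x + y) = q x + q y + 2 * ((B x y).val : ZMod 4)

namespace IsQuadraticEnhancement

variable {B : LinearMap.BilinForm (ZMod 2) V} {q : V → ZMod 4}

lemma map_zero (hq : IsQuadraticEnhancement B q) : q 0 = 0 := by
  simpa using hq 0 0

lemma add_self (hq : IsQuadraticEnhancement B q) (x : V) :
    q x + q x = 2 * ((B x x).val : ZMod 4) := by
  have h := hq x x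
  rw [ZModModule.add_self, hq.map_zero] at h
  have h4 : (4 : ZMod 4) = 0 := rfl
  linear_combination -h - ((B x x).val : ZMod 4) * h4

lemma iChar_mul_iChar_add (hq : IsQuadraticEnhancement B q) (x s : V) :
    iChar (q x) * iChar (q (x + s)) = iChar (q s) * signChar (B x x + B x s) := by
  have hsq : iChar (q x) * iChar (q x) = signChar (B x x) := by
    rw [← AddChar.map_add_eq_mul, hq.add_self, iChar_two_mul_val]
  rw [hq x s, AddChar.map_add_eq_mul, AddChar.map_add_eq_mul, iChar_two_mul_val,
    AddChar.map_add_eq_mul, ← hsq]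
  ring

lemma sq_sum_iChar [Fintype V] (hq : IsQuadraticEnhancement B q) (hB : ∀ x y, B x y = B y x)
    (hinj : Function.Injective B) {c : V} (hc : ∀ x, B c x = B x x) :
    (∑ x, iChar (q x)) ^ 2 = Fintype.card V * iChar (q c) := by
  classical
  have hchar (s : V) :
      ∑ x, signChar (B x x + B x s) = if s = c then (Fintype.card V : ℂ) else 0 := by
    have hlin (x : V) : B x x + B x s = B (c + s) x := by simp [hc, hB s]
    simp_rw [hlin, sum_signChar_dual, hinj.eq_iff' (_root_.map_zero B),
      add_eq_zero_iff_eq_neg, ZModModule.neg_eq_self, eq_comm]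
  calc (∑ x, iChar (q x)) ^ 2 = ∑ x, ∑ s, iChar (q x) * iChar (q (x + s)) := by
        rw [sq, Finset.sum_mul_sum]
        exact Fintype.sum_congr _ _ fun x => (Equiv.sum_comp (Equiv.addLeft x) _).symm
    _ = ∑ s, iChar (q s) * ∑ x, signChar (B x x + B x s) := by
        simp_rw [hq.iChar_mul_iChar_add, Finset.mul_sum]
        exact Finset.sum_comm
    _ = Fintype.card V * iChar (q c) := by
        simp [hchar, mul_comm]

end IsQuadraticEnhancement

end

theorem arf_brown_gauss_sum_eighth_root_general
    (V : Type*) [AddCommGroup V] [Module (ZMod 2) V]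
    [Fintype V]
    (B : LinearMap.BilinForm (ZMod 2) V)
    (hsymm : ∀ x y : V, B x y = B y x)
    (hnd : Function.Bijective fun x : V => (B x : Module.Dual (ZMod 2) V))
    (q : V → ZMod 4)
    (hq : ∀ x y : V, q (x + y) = q x + q y + 2 * ((B x y).val : ZMod 4)) :
    (∑ x : V, Complex.I ^ (q x).val) ^ 8 = (Fintype.card V : ℂ) ^ 4 := by
  obtain ⟨c, hc⟩ := exists_apply_eq_apply_self B hsymm hnd.2
  calc (∑ x : V, I ^ (q x).val) ^ 8 = ((∑ x, iChar (q x)) ^ 2) ^ 4 := by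
        simp only [iChar_apply]; ring
    _ = (Fintype.card V : ℂ) ^ 4 := by
        rw [IsQuadraticEnhancement.sq_sum_iChar hq hsymm hnd.1 hc, mul_pow, iChar_pow_four,
          mul_one]

/-- The Arf–Brown Gauss sum of a `ℤ/4`-quadratic enhancement of a nondegenerate symmetric
bilinear form on a finite-dimensional `ZMod 2`-vector space is, up to normalization by
`√(card V)`, an eighth root of unity: `S(q)^8 = (card V)^4`. -/
theorem arf_brown_gauss_sum_eighth_root
    (V : Type*) [AddCommGroup V] [Module (ZMod 2) V] [FiniteDimensional (ZMod 2) V]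
    [Fintype V]
    (B : LinearMap.BilinForm (ZMod 2) V)
    (hsymm : ∀ x y : V, B x y = B y x)
    (hnd : Function.Bijective fun x : V => (B x : Module.Dual (ZMod 2) V))
    (q : V → ZMod 4)
    (hq : ∀ x y : V, q (x + y) = q x + q y + 2 * ((B x y).val : ZMod 4)) :
    (∑ x : V, Complex.I ^ (q x).val) ^ 8 = (Fintype.card V : ℂ) ^ 4 :=
  arf_brown_gauss_sum_eighth_root_general V B hsymm hnd q hq
end

section
/- Let V be a finite-dimensional vector space over ZMod 2, let B be a nondegenerate symmetric bilinear form on V, and let q be a ℤ/4-quadratic enhancement of B. Then the Gauss sum S(q) = Σ_{x ∈ V} I^{(q x).val} has squared absolute value equal to the cardinality of V: Complex.abs (S(q))^2 = Fintype.card V. -/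
/-!
Expanding `|S|² = S · conj S` and substituting `x = z + y` gives
`|S|² = Σ_z Σ_y χ(q(z + y) - q(y)) = Σ_z χ(q z) Σ_y χ(⟨2⟩ B(z, y))`.
For fixed `z` the inner sum is a character sum over `V`, so it vanishes unless
`y ↦ ⟨2⟩ B(z, y)` is zero, i.e. unless `z` lies in the radical of `B`. By nondegeneracy only
`z = 0` survives, contributing `|V| · χ(q 0) = |V|`.
-/

open Finset

namespace AddChar

variable {G A K : Type*} [AddCommGroup G] [Fintype G] [AddCommGroup A] [Finite A] [RCLike K]

theorem norm_sq_sum_comp (ψ : AddChar A K) (f : G → A) :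
    ((‖∑ x, ψ (f x)‖ ^ 2 : ℝ) : K) = ∑ z, ∑ y, ψ (f (z + y) - f y) := by
  have hpair : ∀ x y, ψ (f x) * starRingEnd K (ψ (f y)) = ψ (f x - f y) := fun x y => by
    rw [← map_neg_eq_conj, ← map_add_eq_mul, sub_eq_add_neg]
  calc ((‖∑ x, ψ (f x)‖ ^ 2 : ℝ) : K)
      = ∑ y, ∑ x, ψ (f x - f y) := by
        rw [RCLike.ofReal_pow, ← RCLike.mul_conj, map_sum, sum_mul_sum, sum_comm]
        simp only [hpair]
    _ = ∑ y, ∑ z, ψ (f (z + y) - f y) :=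
        sum_congr rfl fun y _ => (Fintype.sum_equiv (Equiv.addRight y) _ _ fun _ => rfl).symm
    _ = ∑ z, ∑ y, ψ (f (z + y) - f y) := sum_comm

open Classical in
theorem norm_sq_sum_comp_quadratic (ψ : AddChar A K) (q : G → A) (b : G → G →+ A)
    (hq : ∀ x y, q (x + y) = q x + q y + b x y) :
    ((‖∑ x, ψ (q x)‖ ^ 2 : ℝ) : K) =
      Fintype.card G * ∑ z with ψ.compAddMonoidHom (b z) = 0, ψ (q z) := by
  have hshift : ∀ z, ∑ y, ψ (q (z + y) - q y) = ψ (q z) * ∑ y, ψ.compAddMonoidHom (b z) y :=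
    fun z => by
      simp only [hq, add_right_comm _ (q _), add_sub_cancel_right, map_add_eq_mul, mul_sum,
        compAddMonoidHom_apply]
  simp only [norm_sq_sum_comp, hshift, sum_eq_ite, mul_ite, mul_zero, sum_filter, mul_sum]
  exact sum_congr rfl fun z _ => by split_ifs <;> ring

theorem zmodChar_injective {C : Type*} [CommMonoid C] {n : ℕ} [NeZero n] {ζ : C}
    (hζ : ζ ^ n = 1) (h : IsPrimitiveRoot ζ n) : Function.Injective (zmodChar n hζ) :=
  fun a b hab => ZMod.val_injective n (h.pow_inj a.val_lt b.val_lt hab)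

end AddChar

def ZMod.twoMulCast : ZMod 2 →+ ZMod 4 :=
  AddMonoidHom.mk' (fun b => 2 * (b.val : ZMod 4)) (by decide)

theorem ZMod.twoMulCast_injective : Function.Injective ZMod.twoMulCast := by decide

theorem arf_brown_gauss_sum_abs_sq_general
    (V : Type*) [AddCommGroup V] [Module (ZMod 2) V]
    [Fintype V]
    (B : LinearMap.BilinForm (ZMod 2) V)
    (hnd : Function.Bijective fun x : V => (B x : Module.Dual (ZMod 2) V))
    (q : V → ZMod 4)
    (hq : ∀ x y : V, q (x + y) = q x + q y + 2 * ((B x y).val : ZMod 4)) :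
    ‖∑ x : V, Complex.I ^ (q x).val‖ ^ 2 = Fintype.card V := by
  set χ := AddChar.zmodChar 4 Complex.I_pow_four
  set b : V → V →+ ZMod 4 := fun z => ZMod.twoMulCast.comp (B z).toAddMonoidHom
  have hrad : ∀ z, χ.compAddMonoidHom (b z) = 0 ↔ z = 0 := fun z => by
    have hχ := AddChar.zmodChar_injective Complex.I_pow_four Complex.isPrimitiveRoot_I
    constructor
    · intro h
      refine hnd.injective (LinearMap.ext fun y => ?_)
      have hy := AddChar.eq_zero_iff.mp h y
      rw [AddChar.compAddMonoidHom_apply, ← χ.map_zero_eq_one] at hy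
      simpa using ZMod.twoMulCast_injective (hχ hy)
    · rintro rfl
      ext y
      simp [b]
  have hfilter : ({z | χ.compAddMonoidHom (b z) = 0} : Finset V) = {0} := by
    ext z; simp [hrad]
  have hq0 : q 0 = 0 := by simpa using hq 0 0
  have key := χ.norm_sq_sum_comp_quadratic q b hq
  rw [hfilter, Finset.sum_singleton, hq0, χ.map_zero_eq_one, mul_one] at key
  change ‖∑ x, χ (q x)‖ ^ 2 = _
  rwa [← RCLike.ofReal_natCast, RCLike.ofReal_inj] at key

/-- The Gauss sum of a `ℤ/4`-quadratic enhancement of a nondegenerate symmetric bilinear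
form on a finite-dimensional `ZMod 2`-vector space has squared absolute value equal to
the cardinality of `V`. -/
theorem arf_brown_gauss_sum_abs_sq
    (V : Type*) [AddCommGroup V] [Module (ZMod 2) V] [FiniteDimensional (ZMod 2) V]
    [Fintype V]
    (B : LinearMap.BilinForm (ZMod 2) V)
    (hsymm : ∀ x y : V, B x y = B y x)
    (hnd : Function.Bijective fun x : V => (B x : Module.Dual (ZMod 2) V))
    (q : V → ZMod 4)
    (hq : ∀ x y : V, q (x + y) = q x + q y + 2 * ((B x y).val : ZMod 4)) :
    ‖∑ x : V, Complex.I ^ (q x).val‖ ^ 2 = Fintype.card V :=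
  arf_brown_gauss_sum_abs_sq_general V B hnd q hq
end

section
/- Every symmetric bilinear form B with values in ZMod 2 on a finite-dimensional vector space V over ZMod 2 admits a ℤ/4-quadratic enhancement: there exists a function q : V → ZMod 4 with q(x+y) = q(x) + q(y) + ⟨2⟩(B(x,y)) for all x, y ∈ V. -/
/-!
Lift the Gram matrix of `B` in a basis entrywise to a symmetric matrix `A` over `ℤ/4`, lift the
coordinates of `x` to `x̃ ∈ (ℤ/4)ⁿ`, and put `q x = x̃ᵀ A x̃`. Lifting coordinates is additive up
to a multiple of `2`, which `x̃ᵀ A x̃` does not see since `4 = 0`; the cross term `2 x̃ᵀ A ỹ` only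
depends on `x̃ᵀ A ỹ` modulo `2`, and that is `B x y`.
-/

open LinearMap (BilinForm)
open scoped Matrix

namespace LinearMap.BilinForm.IsSymm

variable {R M : Type*} [CommSemiring R] [AddCommMonoid M] [Module R M] {F : BilinForm R M}

theorem apply_add_add (hF : F.IsSymm) (v w : M) :
    F (v + w) (v + w) = F v v + F w w + 2 * F v w := by
  simp only [map_add, LinearMap.add_apply, hF.eq w v]
  ring

theorem apply_add_two_smul (hF : F.IsSymm) (h4 : (4 : R) = 0) (v u : M) :
    F (v + (2 : R) • u) (v + (2 : R) • u) = F v v := by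
  have h22 : (2 : R) * 2 = 0 := by rw [← h4]; norm_num
  simp only [hF.apply_add_add, map_smul, LinearMap.smul_apply, smul_eq_mul, ← mul_assoc, h22,
    zero_mul, add_zero]

end LinearMap.BilinForm.IsSymm

local notation "π₂" => ZMod.castHom (show 2 ∣ 4 by decide) (ZMod 2)

namespace ZMod

theorem natCast_val_add_zmod_two (a b : ZMod 2) :
    ((a + b).val : ZMod 4) = a.val + b.val + 2 * (a.val * b.val) := by
  revert a b; decide

theorem two_mul_natCast_val_castHom (z : ZMod 4) : 2 * ((π₂ z).val : ZMod 4) = 2 * z := by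
  revert z; decide

end ZMod

noncomputable section

variable {V ι : Type*} [AddCommGroup V] [Module (ZMod 2) V] (b : Module.Basis ι (ZMod 2) V)

def liftCoords (x : V) : ι → ZMod 4 := fun i => (b.repr x i).val

theorem liftCoords_add (x y : V) :
    liftCoords b (x + y) =
      liftCoords b x + liftCoords b y + (2 : ZMod 4) • (liftCoords b x * liftCoords b y) := by
  ext i
  simp only [liftCoords, map_add, Finsupp.add_apply, ZMod.natCast_val_add_zmod_two, Pi.add_apply,
    Pi.smul_apply, Pi.mul_apply, smul_eq_mul]

theorem castHom_comp_liftCoords (x : V) : π₂ ∘ liftCoords b x = b.repr x := by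
  ext i
  simp [liftCoords]

variable [Fintype ι] [DecidableEq ι] (B : BilinForm (ZMod 2) V)

def liftForm : BilinForm (ZMod 4) (ι → ZMod 4) :=
  ((LinearMap.BilinForm.toMatrix b B).map fun a => (a.val : ZMod 4)).toBilin'

theorem isSymm_liftForm {B : BilinForm (ZMod 2) V} (hB : B.IsSymm) : (liftForm b B).IsSymm :=
  Matrix.isSymm_toBilin'_iff_isSymm.mpr (((BilinForm.isSymm_toMatrix_iff_isSymm b).mpr hB).map _)

theorem castHom_liftForm (x y : V) :
    π₂ (liftForm b B (liftCoords b x) (liftCoords b y)) = B x y := by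
  set G := LinearMap.BilinForm.toMatrix b B
  have hG : (G.map fun a => (a.val : ZMod 4)).map π₂ = G := by
    ext i j
    simp
  have hmulVec :
      π₂ ∘ ((G.map fun a => (a.val : ZMod 4)) *ᵥ liftCoords b y) = G *ᵥ b.repr y := by
    ext i
    rw [Function.comp_apply, RingHom.map_mulVec, hG, castHom_comp_liftCoords]
  rw [liftForm, Matrix.toBilin'_apply', RingHom.map_dotProduct, hmulVec, castHom_comp_liftCoords,
    LinearMap.BilinForm.apply_eq_dotProduct_toMatrix_mulVec b]

def liftQuad (x : V) : ZMod 4 := liftForm b B (liftCoords b x) (liftCoords b x)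

theorem liftQuad_add {B : BilinForm (ZMod 2) V} (hB : B.IsSymm) (x y : V) :
    liftQuad b B (x + y) = liftQuad b B x + liftQuad b B y + 2 * ((B x y).val : ZMod 4) := by
  have hF := isSymm_liftForm b hB
  unfold liftQuad
  rw [liftCoords_add, hF.apply_add_two_smul (by decide), hF.apply_add_add,
    ← castHom_liftForm b B x y, ZMod.two_mul_natCast_val_castHom]

end

/-- Every symmetric bilinear form `B` valued in `ZMod 2` on a finite-dimensional
`ZMod 2`-vector space admits a `ℤ/4`-quadratic enhancement `q : V → ZMod 4` satisfying
`q(x+y) = q(x) + q(y) + ⟨2⟩(B(x,y))`, where `⟨2⟩ : ZMod 2 → ZMod 4` sends `1` to `2`. -/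
theorem exists_quadEnh4
    (V : Type*) [AddCommGroup V] [Module (ZMod 2) V] [FiniteDimensional (ZMod 2) V]
    (B : LinearMap.BilinForm (ZMod 2) V)
    (hsymm : ∀ x y : V, B x y = B y x) :
    ∃ q : V → ZMod 4, ∀ x y : V, q (x + y) = q x + q y + 2 * ((B x y).val : ZMod 4) :=
  ⟨liftQuad (Module.finBasis (ZMod 2) V) B, liftQuad_add _ ⟨hsymm⟩⟩
end

section
/- Let n ≥ 1, let t : Fin n → ZMod 2, and let m be the number of e : Fin n with t(e) = 1. Define the linear operator H on the space (Fin n → ZMod 2) → ℂ by (H f)(a) = (1/2)·(Σ_{e : Fin n} (-1)^{(t e + a e).val})·f(a). Then: (i) every eigenvalue of H is real and at least -n/2; (ii) the eigenspace of H for the eigenvalue -n/2 is one-dimensional, spanned by the indicator function of a₀ : Fin n → ZMod 2 defined by a₀(e) = t(e) + 1; (iii) the number of e with a₀(e) = 1 equals n - m, so this ground state has parity n - m mod 2. -/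
/-- For the diagonalized Majorana chain Hamiltonian on a triangulated circle with `n` edges
and combinatorial pin⁻ data `t`, every eigenvalue is real and at least `-n/2`; the ground
state eigenspace (eigenvalue `-n/2`) is the line spanned by the indicator function of
`a₀ = t + 1`, and the parity of this ground state is `n - m` where `m = #{e | t e = 1}`. -/
theorem majorana_chain_diagonal_ground_state
    (n : ℕ) (hn : 1 ≤ n) (t : Fin n → ZMod 2)
    (m : ℕ) (hm : m = (Finset.univ.filter fun e : Fin n => t e = 1).card)
    (H : Module.End ℂ ((Fin n → ZMod 2) → ℂ))
    (hH : ∀ (f : (Fin n → ZMod 2) → ℂ) (a : Fin n → ZMod 2),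
      H f a = (1/2 : ℂ) * (∑ e : Fin n, (-1 : ℂ) ^ (t e + a e).val) * f a)
    (a₀ : Fin n → ZMod 2) (ha₀ : ∀ e : Fin n, a₀ e = t e + 1) :
    (∀ μ : ℂ, H.HasEigenvalue μ → μ.im = 0 ∧ -(n : ℝ)/2 ≤ μ.re) ∧
    Module.End.eigenspace H (-(n : ℂ)/2) =
      Submodule.span ℂ {fun a : Fin n → ZMod 2 => if a = a₀ then (1 : ℂ) else 0} ∧
    Module.finrank ℂ (Module.End.eigenspace H (-(n : ℂ)/2)) = 1 ∧
    (Finset.univ.filter fun e : Fin n => a₀ e = 1).card = n - m := by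
  have h2 : ∀ x y : ZMod 2, x + y = 1 ↔ y = x + 1 := by decide
  have hval : ∀ x : ZMod 2, x.val = 0 ∨ x.val = 1 := by decide
  have hval1 : ∀ x : ZMod 2, x.val = 1 ↔ x = 1 := by decide
  -- real value of the diagonal sum
  set r : (Fin n → ZMod 2) → ℝ := fun a => ∑ e : Fin n, (-1 : ℝ) ^ (t e + a e).val with hr
  have hcast : ∀ a, (∑ e : Fin n, (-1 : ℂ) ^ (t e + a e).val) = ((r a : ℝ) : ℂ) := by
    intro a
    rw [hr]
    push_cast
    rfl
  have hrange : ∀ (a : Fin n → ZMod 2) (e : Fin n), (-1 : ℝ) ≤ (-1 : ℝ) ^ (t e + a e).val := by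
    intro a e
    rcases hval (t e + a e) with h | h <;> rw [h] <;> norm_num
  have hlb : ∀ a, -(n : ℝ) ≤ r a := by
    intro a
    calc -(n : ℝ) = ∑ _e : Fin n, (-1 : ℝ) := by simp
    _ ≤ r a := Finset.sum_le_sum fun e _ => hrange a e
  have hra₀ : r a₀ = -(n : ℝ) := by
    have hv : ∀ e : Fin n, (t e + a₀ e).val = 1 := fun e => by
      rw [ha₀ e]; exact (hval1 _).mpr ((h2 _ _).mpr rfl)
    rw [hr]
    simp only
    rw [Finset.sum_congr rfl fun e _ => by rw [hv e]]
    simp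
  have heq : ∀ a, r a = -(n : ℝ) ↔ a = a₀ := by
    intro a
    constructor
    · intro h
      have hsum : ∑ e : Fin n, ((-1 : ℝ) ^ (t e + a e).val + 1) = 0 := by
        rw [Finset.sum_add_distrib]
        simp only [Finset.sum_const, Finset.card_univ, Fintype.card_fin, nsmul_eq_mul, mul_one]
        rw [show (∑ e : Fin n, (-1 : ℝ) ^ (t e + a e).val) = r a from rfl, h]
        ring
      have hall := (Finset.sum_eq_zero_iff_of_nonneg (fun e _ => by
        have := hrange a e; linarith)).mp hsum
      funext e
      have he := hall e (Finset.mem_univ e)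
      have hv : (t e + a e).val = 1 := by
        rcases hval (t e + a e) with hv | hv
        · rw [hv] at he; norm_num at he
        · exact hv
      have : t e + a e = 1 := (hval1 _).mp hv
      rw [(h2 _ _).mp this, ← ha₀ e]
    · intro h
      rw [h]; exact hra₀
  -- the candidate ground state
  set g : (Fin n → ZMod 2) → ℂ := fun a => if a = a₀ then (1 : ℂ) else 0 with hg
  have hgE : H g = (-(n : ℂ)/2) • g := by
    funext a
    rw [hH]
    by_cases h : a = a₀
    · rw [h, hcast, hra₀]
      simp [hg]
      push_cast
      ring
    · simp [hg, h]
  have hspan : Module.End.eigenspace H (-(n : ℂ)/2) =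
      Submodule.span ℂ {fun a : Fin n → ZMod 2 => if a = a₀ then (1 : ℂ) else 0} := by
    apply le_antisymm
    · intro f hf
      rw [Module.End.mem_eigenspace_iff] at hf
      have hfeq : f = f a₀ • g := by
        funext a
        by_cases h : a = a₀
        · rw [h]; simp [hg]
        · have := congrFun hf a
          rw [hH] at this
          have hsmul : ((-(n : ℂ)/2) • f) a = (-(n : ℂ)/2) * f a := rfl
          rw [hsmul, hcast] at this
          have hne : ((r a : ℝ) : ℂ) ≠ -(n : ℂ) := by
            intro hc
            apply h
            apply (heq a).mp
            have : ((r a : ℝ) : ℂ) = ((-(n : ℝ) : ℝ) : ℂ) := by push_cast [hc]; ring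
            exact_mod_cast this
          have hfa : f a = 0 := by
            by_contra hfa
            apply hne
            have h3 := mul_right_cancel₀ hfa this
            linear_combination 2 * h3
          simp [hg, h, hfa]
      rw [hfeq]
      exact Submodule.smul_mem _ _ (Submodule.mem_span_singleton_self g)
    · rw [Submodule.span_le, Set.singleton_subset_iff]
      exact Module.End.mem_eigenspace_iff.mpr hgE
  refine ⟨?_, hspan, ?_, ?_⟩
  · -- eigenvalues real and ≥ -n/2
    intro μ hμ
    obtain ⟨f, hf⟩ := hμ.exists_hasEigenvector
    obtain ⟨hfE, hf0⟩ := hf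
    rw [Module.End.mem_eigenspace_iff] at hfE
    obtain ⟨a, ha⟩ := Function.ne_iff.mp hf0
    have := congrFun hfE a
    rw [hH] at this
    have hsmul : (μ • f) a = μ * f a := rfl
    rw [hsmul, hcast] at this
    have hc := mul_right_cancel₀ ha this
    have hμval : μ = ((r a : ℝ) : ℂ) / 2 := by rw [← hc]; ring
    constructor
    · rw [hμval]; simp
    · rw [hμval]
      have := hlb a
      simp only [Complex.div_re, Complex.ofReal_re, Complex.ofReal_im]
      norm_num
      nlinarith [hlb a]
  · -- finrank 1
    rw [hspan]
    have hgne : g ≠ 0 := by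
      intro hc
      have := congrFun hc a₀
      simp [hg] at this
    exact finrank_span_singleton hgne
  · -- parity count
    have hx : ∀ x : ZMod 2, (x + 1 = 1 ↔ ¬ x = 1) := by decide
    have hfe : (Finset.univ.filter fun e : Fin n => a₀ e = 1) =
        (Finset.univ.filter fun e : Fin n => ¬ t e = 1) := by
      apply Finset.filter_congr
      intro e _
      rw [ha₀ e]
      exact hx (t e)
    rw [hfe, hm]
    have hadd := Finset.card_filter_add_card_filter_not
      (s := (Finset.univ : Finset (Fin n))) (p := fun e => t e = 1)
    simp only [Finset.card_univ, Fintype.card_fin] at hadd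
    omega
end

section
/- Let n ≥ 2 and let t : Fin (n-1) → ZMod 2. Define the Majorana chain Hamiltonian on the interval as the operator H := (1/2)·Σ_{i : Fin (n-1)} (-1)^{(t i).val} · (c_{i+1} ∘ d_i) on Λ = ExteriorAlgebra ℂ (Fin n → ℂ) (here i+1 is the successor in Fin n, no wrap-around, so the operators c_0 and d_{n-1} do not appear in H). Then every eigenvalue of H is real and at least -(n-1)/2, and the eigenspace of H for the eigenvalue -(n-1)/2 is two-dimensional; i.e. the space of ground states of the Majorana chain on an interval with n vertices is two-dimensional. -/
/-!
With `A i = (-1)^(t i) c_{i+1} d_i`, the Clifford relations of the Majorana operators make the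
`A i` pairwise commuting involutions, so the `P i = (1 + A i)/2` are commuting idempotents and
`H = ∑ P i - (n-1)/2`. For an eigenvector `x` of `∑ P i`, either `P i x = 0` and `x` is an
eigenvector of the other summands, or `P i x` is one with the eigenvalue lowered by one; hence the
eigenvalues of `∑ P i` are natural numbers and its kernel is the joint kernel of the `P i`.
The involution `c_{i+1}` anticommutes with `A i` and commutes with every other `A j`, so it
exchanges `ker P i` and `ker (1 - P i)` inside each joint kernel of the other projections: each of
the `n - 1` edges halves the dimension of `Λ`, leaving `2^n / 2^(n-1) = 2`.
-/

/-- Left exterior multiplication by the basis vector `δ_v` (the creation operator `ε_v`). -/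
noncomputable def creation {n : ℕ} (v : Fin n) :
    Module.End ℂ (ExteriorAlgebra ℂ (Fin n → ℂ)) :=
  LinearMap.mulLeft ℂ (ExteriorAlgebra.ι ℂ (Pi.single v 1))

/-- Left contraction (interior product) by the dual basis functional `δ_v^*`
(the annihilation operator `ι_v`). -/
noncomputable def annihilation {n : ℕ} (v : Fin n) :
    Module.End ℂ (ExteriorAlgebra ℂ (Fin n → ℂ)) :=
  CliffordAlgebra.contractLeft (Q := (0 : QuadraticForm ℂ (Fin n → ℂ)))
    (LinearMap.proj v)

/-- The Majorana operator `c_v = ε_v + ι_v`. -/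
noncomputable def majoranaC {n : ℕ} (v : Fin n) :
    Module.End ℂ (ExteriorAlgebra ℂ (Fin n → ℂ)) :=
  creation v + annihilation v

/-- The Majorana operator `d_v = ε_v - ι_v`. -/
noncomputable def majoranaD {n : ℕ} (v : Fin n) :
    Module.End ℂ (ExteriorAlgebra ℂ (Fin n → ℂ)) :=
  creation v - annihilation v

section Anticommuting

variable {R : Type*} [Ring R]

theorem commute_mul_of_anticommute {a b c : R} (hb : a * b = -(b * a)) (hc : a * c = -(c * a)) :
    Commute a (b * c) :=
  calc a * (b * c) = -(b * (a * c)) := by rw [← mul_assoc, hb, neg_mul, mul_assoc]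
    _ = b * c * a := by rw [hc, mul_neg, neg_neg, mul_assoc]

theorem mul_mul_mul_self_of_anticommute {a b : R} (ha : a * a = 1) (hb : b * b = -1)
    (h : b * a = -(a * b)) : a * b * (a * b) = 1 :=
  calc a * b * (a * b) = a * (b * a) * b := by simp only [mul_assoc]
    _ = -(a * a * (b * b)) := by rw [h]; simp only [mul_neg, neg_mul, mul_assoc]
    _ = 1 := by rw [ha, hb, one_mul, neg_neg]

theorem mul_mul_eq_neg_of_anticommute {a b : R} (ha : a * a = 1) (h : b * a = -(a * b)) :
    a * (a * b) = -(a * b * a) := by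
  rw [← mul_assoc, ha, one_mul, mul_assoc, h, mul_neg, ← mul_assoc, ha, one_mul, neg_neg]

variable {K : Type*} [Field K] [CharZero K] [Algebra K R]

theorem isIdempotentElem_inv_two_smul_one_add {a : R} (ha : a * a = 1) :
    IsIdempotentElem ((2⁻¹ : K) • (1 + a)) := by
  have hsq : (1 + a) * (1 + a) = (2 : K) • (1 + a) := by
    simp only [add_mul, mul_add, ha, mul_one, one_mul, two_smul]; abel
  rw [IsIdempotentElem, smul_mul_smul_comm, hsq, smul_smul]
  norm_num

theorem mul_inv_two_smul_one_add_of_anticommute {a b : R} (h : b * a = -(a * b)) :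
    b * (2⁻¹ : K) • (1 + a) = (1 - (2⁻¹ : K) • (1 + a)) * b := by
  rw [mul_smul_comm, mul_add, mul_one, h, sub_mul, smul_mul_assoc, add_mul, one_mul]
  module

end Anticommuting

section CommutingIdempotents

open Module LinearMap

variable {K V ι : Type*} [Field K] [AddCommGroup V] [Module K V]

theorem IsIdempotentElem.apply_apply_eq_sub_one_smul {P S : End K V} (hP : IsIdempotentElem P)
    (hPS : Commute P S) {μ : K} {x : V} (hx : P x + S x = μ • x) :
    S (P x) = (μ - 1) • P x := by
  have h := congrArg P hx
  rw [map_add, map_smul, ← Module.End.mul_apply P P, hP.eq, ← Module.End.mul_apply,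
    hPS.eq, Module.End.mul_apply] at h
  rw [sub_smul, one_smul, ← h, add_sub_cancel_left]

theorem exists_eq_natCast_of_sum_apply_eq_smul {P : ι → End K V}
    (hP : ∀ i, IsIdempotentElem (P i)) (hPP : Pairwise fun i j => Commute (P i) (P j))
    (s : Finset ι) {μ : K} {x : V} (hx : (∑ i ∈ s, P i) x = μ • x) (hx0 : x ≠ 0) :
    ∃ m ≤ s.card, μ = m := by
  classical
  induction s using Finset.induction_on generalizing μ x with
  | empty =>
    refine ⟨0, le_rfl, ?_⟩
    rw [Finset.sum_empty, LinearMap.zero_apply, eq_comm, smul_eq_zero] at hx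
    exact_mod_cast hx.resolve_right hx0
  | insert a s ha ih =>
    rw [Finset.sum_insert ha, LinearMap.add_apply] at hx
    rw [Finset.card_insert_of_notMem ha]
    by_cases hPx : P a x = 0
    · rw [hPx, zero_add] at hx
      obtain ⟨m, hm, rfl⟩ := ih hx hx0
      exact ⟨m, hm.trans s.card.le_succ, rfl⟩
    · have hcomm : Commute (P a) (∑ i ∈ s, P i) :=
        Commute.sum_right _ _ _ fun i hi => hPP (ne_of_mem_of_not_mem hi ha).symm
      obtain ⟨m, hm, hμ⟩ := ih ((hP a).apply_apply_eq_sub_one_smul hcomm hx) hPx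
      exact ⟨m + 1, Nat.succ_le_succ hm, by rw [Nat.cast_succ, ← hμ, sub_add_cancel]⟩

theorem ker_sum_eq_iInf_ker [CharZero K] {P : ι → End K V}
    (hP : ∀ i, IsIdempotentElem (P i)) (hPP : Pairwise fun i j => Commute (P i) (P j))
    (s : Finset ι) :
    ker (∑ i ∈ s, P i) = ⨅ i ∈ s, ker (P i) := by
  classical
  refine le_antisymm (fun x hx => ?_) (fun x hx => ?_)
  · simp only [Submodule.mem_iInf, mem_ker]
    intro a ha
    by_contra hPx
    rw [mem_ker, ← Finset.add_sum_erase s P ha, LinearMap.add_apply, ← zero_smul K x] at hx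
    have hcomm : Commute (P a) (∑ i ∈ s.erase a, P i) :=
      Commute.sum_right _ _ _ fun i hi => hPP (Finset.ne_of_mem_erase hi).symm
    obtain ⟨m, -, hm⟩ := exists_eq_natCast_of_sum_apply_eq_smul hP hPP (s.erase a)
      ((hP a).apply_apply_eq_sub_one_smul hcomm hx) hPx
    exact Nat.cast_add_one_ne_zero (R := K) m (by rw [← hm]; ring)
  · simp only [Submodule.mem_iInf, mem_ker] at hx
    rw [mem_ker, LinearMap.sum_apply]
    exact Finset.sum_eq_zero hx

theorem apply_mem_iInf_ker_of_commute {T : End K V} {P : ι → End K V} {s : Finset ι}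
    (hT : ∀ i ∈ s, Commute T (P i)) {x : V} (hx : x ∈ ⨅ i ∈ s, ker (P i)) :
    T x ∈ ⨅ i ∈ s, ker (P i) := by
  simp only [Submodule.mem_iInf, mem_ker] at hx ⊢
  intro i hi
  rw [← Module.End.mul_apply, ← (hT i hi).eq, Module.End.mul_apply, hx i hi, map_zero]

variable [FiniteDimensional K V]

theorem finrank_inf_ker_mul_two {P B : End K V} {W : Submodule K V} (hP : IsIdempotentElem P)
    (hB : B * B = 1) (hBP : B * P = (1 - P) * B) (hPW : ∀ x ∈ W, P x ∈ W)
    (hBW : ∀ x ∈ W, B x ∈ W) :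
    finrank K ↥(W ⊓ ker P) * 2 = finrank K W := by
  have hPP : ∀ x, P (P x) = P x := fun x => congrArg (· x) hP.eq
  have hPB : P * B = B * (1 - P) :=
    calc P * B = B * (B * P) * B := by rw [← mul_assoc, hB, one_mul]
      _ = B * (1 - P) := by rw [hBP, mul_assoc, mul_assoc, hB, mul_one]
  have hsup : W ⊓ ker P ⊔ W ⊓ ker (1 - P) = W := by
    refine le_antisymm (sup_le inf_le_left inf_le_left) fun x hx => ?_
    refine Submodule.mem_sup.mpr
      ⟨x - P x, Submodule.mem_inf.mpr ⟨W.sub_mem hx (hPW x hx), ?_⟩,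
        P x, Submodule.mem_inf.mpr ⟨hPW x hx, ?_⟩, sub_add_cancel x (P x)⟩
    · rw [mem_ker, map_sub, hPP, sub_self]
    · rw [mem_ker, LinearMap.sub_apply, Module.End.one_apply, hPP, sub_self]
  have hinf : W ⊓ ker P ⊓ (W ⊓ ker (1 - P)) = ⊥ := by
    refine (Submodule.eq_bot_iff _).mpr fun x hx => ?_
    simp only [Submodule.mem_inf, mem_ker] at hx
    rw [← hx.2.2, LinearMap.sub_apply, Module.End.one_apply, hx.1.2, sub_zero]
  have hswap : (W ⊓ ker P).map B = W ⊓ ker (1 - P) := by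
    refine le_antisymm ?_ fun y hy => ?_
    · rintro _ ⟨x, hx, rfl⟩
      obtain ⟨hxW, hx⟩ := Submodule.mem_inf.mp hx
      refine Submodule.mem_inf.mpr ⟨hBW x hxW, ?_⟩
      rw [mem_ker] at hx ⊢
      rw [← Module.End.mul_apply, ← hBP, Module.End.mul_apply, hx, map_zero]
    obtain ⟨hyW, hy⟩ := Submodule.mem_inf.mp hy
    refine ⟨B y, Submodule.mem_inf.mpr ⟨hBW y hyW, ?_⟩, ?_⟩
    · rw [mem_ker, ← Module.End.mul_apply, hPB, Module.End.mul_apply, mem_ker.mp hy, map_zero]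
    · rw [← Module.End.mul_apply, hB, Module.End.one_apply]
  have hBinv : Function.Involutive B := fun x => by
    rw [← Module.End.mul_apply, hB, Module.End.one_apply]
  have hmap : finrank K ↥((W ⊓ ker P).map B) = finrank K ↥(W ⊓ ker P) :=
    LinearEquiv.finrank_map_eq (LinearEquiv.ofInvolutive B hBinv) _
  have h := Submodule.finrank_sup_add_finrank_inf_eq (W ⊓ ker P) (W ⊓ ker (1 - P))
  rw [hsup, hinf, finrank_bot, add_zero, ← hswap, hmap] at h
  omega

theorem finrank_iInf_ker_mul_two_pow {P B : ι → End K V}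
    (hP : ∀ i, IsIdempotentElem (P i)) (hPP : Pairwise fun i j => Commute (P i) (P j))
    (hB : ∀ i, B i * B i = 1) (hBP : ∀ i, B i * P i = (1 - P i) * B i)
    (hBP' : Pairwise fun i j => Commute (B i) (P j)) (s : Finset ι) :
    finrank K ↥(⨅ i ∈ s, ker (P i)) * 2 ^ s.card = finrank K V := by
  classical
  induction s using Finset.induction_on with
  | empty =>
    have htop : ⨅ i ∈ (∅ : Finset ι), ker (P i) = ⊤ := by simp
    rw [htop, finrank_top, Finset.card_empty, pow_zero, mul_one]
  | insert a s ha ih =>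
    have hcomm {T : ι → End K V} (hT : Pairwise fun i j => Commute (T i) (P j)) :
        ∀ i ∈ s, Commute (T a) (P i) :=
      fun i hi => hT (ne_of_mem_of_not_mem hi ha).symm
    rw [Finset.iInf_insert, inf_comm, Finset.card_insert_of_notMem ha, pow_succ', ← mul_assoc,
      finrank_inf_ker_mul_two (hP a) (hB a) (hBP a)
        (fun x => apply_mem_iInf_ker_of_commute (hcomm hPP))
        (fun x => apply_mem_iInf_ker_of_commute (hcomm hBP')), ih]

end CommutingIdempotents

theorem Module.End.eigenspace_sub_smul_one {K V : Type*} [CommRing K] [AddCommGroup V]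
    [Module K V] (f : Module.End K V) (c μ : K) :
    (f - c • 1).eigenspace μ = f.eigenspace (μ + c) := by
  rw [eigenspace_def, eigenspace_def, sub_sub, ← add_smul, add_comm c]

theorem ExteriorAlgebra.finrank_pi {K ι : Type*} [Field K] [Fintype ι] [LinearOrder ι] :
    Module.finrank K (ExteriorAlgebra K (ι → K)) = 2 ^ Fintype.card ι := by
  rw [Module.finrank_eq_card_basis (Pi.basisFun K ι).ExteriorAlgebra, Fintype.card_finset]

instance {K ι : Type*} [Field K] [Fintype ι] [LinearOrder ι] :
    FiniteDimensional K (ExteriorAlgebra K (ι → K)) :=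
  .of_basis (Pi.basisFun K ι).ExteriorAlgebra

section MajoranaOperators

variable {n : ℕ}

theorem creation_mul_creation_add (v w : Fin n) :
    creation v * creation w + creation w * creation v = 0 := by
  refine LinearMap.ext fun x => ?_
  simp only [LinearMap.add_apply, Module.End.mul_apply, creation, LinearMap.mulLeft_apply,
    ← mul_assoc, ← add_mul, ExteriorAlgebra.ι_add_mul_swap, zero_mul, LinearMap.zero_apply]

theorem creation_mul_self (v : Fin n) : creation v * creation v = 0 := by
  refine LinearMap.ext fun x => ?_
  simp only [Module.End.mul_apply, creation, LinearMap.mulLeft_apply, ← mul_assoc,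
    ExteriorAlgebra.ι_sq_zero, zero_mul, LinearMap.zero_apply]

theorem annihilation_mul_annihilation_add (v w : Fin n) :
    annihilation v * annihilation w + annihilation w * annihilation v = 0 := by
  refine LinearMap.ext fun x => ?_
  rw [LinearMap.add_apply, Module.End.mul_apply, Module.End.mul_apply, annihilation, annihilation,
    CliffordAlgebra.contractLeft_comm, neg_add_cancel, LinearMap.zero_apply]

theorem annihilation_mul_self (v : Fin n) : annihilation v * annihilation v = 0 :=
  LinearMap.ext fun x => CliffordAlgebra.contractLeft_contractLeft _ x

theorem annihilation_mul_creation_add (v w : Fin n) :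
    annihilation v * creation w + creation w * annihilation v = if v = w then 1 else 0 := by
  refine LinearMap.ext fun x => ?_
  simp only [LinearMap.add_apply, Module.End.mul_apply, creation, LinearMap.mulLeft_apply,
    annihilation, CliffordAlgebra.contractLeft_ι_mul, LinearMap.proj_apply, Pi.single_apply]
  split_ifs <;> simp

theorem majoranaC_mul_self (v : Fin n) : majoranaC v * majoranaC v = 1 := by
  calc majoranaC v * majoranaC v
      = creation v * creation v + (annihilation v * creation v + creation v * annihilation v)
        + annihilation v * annihilation v := by
          simp only [majoranaC, add_mul, mul_add]; abel
    _ = 1 := by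
      rw [creation_mul_self, annihilation_mul_creation_add, annihilation_mul_self, if_pos rfl]
      abel

theorem majoranaD_mul_self (v : Fin n) : majoranaD v * majoranaD v = -1 := by
  calc majoranaD v * majoranaD v
      = creation v * creation v - (annihilation v * creation v + creation v * annihilation v)
        + annihilation v * annihilation v := by
          simp only [majoranaD, sub_mul, mul_sub]; abel
    _ = -1 := by
      rw [creation_mul_self, annihilation_mul_creation_add, annihilation_mul_self, if_pos rfl]
      abel

theorem majoranaC_mul_majoranaC {v w : Fin n} (h : v ≠ w) :
    majoranaC v * majoranaC w = -(majoranaC w * majoranaC v) := by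
  rw [eq_neg_iff_add_eq_zero]
  calc majoranaC v * majoranaC w + majoranaC w * majoranaC v
      = (creation v * creation w + creation w * creation v)
        + (annihilation v * annihilation w + annihilation w * annihilation v)
        + (annihilation v * creation w + creation w * annihilation v)
        + (annihilation w * creation v + creation v * annihilation w) := by
          simp only [majoranaC, add_mul, mul_add]; abel
    _ = 0 := by
      simp [creation_mul_creation_add, annihilation_mul_annihilation_add,
        annihilation_mul_creation_add, h, h.symm]

theorem majoranaD_mul_majoranaD {v w : Fin n} (h : v ≠ w) :
    majoranaD v * majoranaD w = -(majoranaD w * majoranaD v) := by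
  rw [eq_neg_iff_add_eq_zero]
  calc majoranaD v * majoranaD w + majoranaD w * majoranaD v
      = (creation v * creation w + creation w * creation v)
        + (annihilation v * annihilation w + annihilation w * annihilation v)
        - (annihilation v * creation w + creation w * annihilation v)
        - (annihilation w * creation v + creation v * annihilation w) := by
          simp only [majoranaD, sub_mul, mul_sub]; abel
    _ = 0 := by
      simp [creation_mul_creation_add, annihilation_mul_annihilation_add,
        annihilation_mul_creation_add, h, h.symm]

theorem majoranaC_mul_majoranaD (v w : Fin n) :
    majoranaC v * majoranaD w = -(majoranaD w * majoranaC v) := by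
  rw [eq_neg_iff_add_eq_zero]
  calc majoranaC v * majoranaD w + majoranaD w * majoranaC v
      = (creation v * creation w + creation w * creation v)
        - (annihilation v * annihilation w + annihilation w * annihilation v)
        + (annihilation v * creation w + creation w * annihilation v)
        - (annihilation w * creation v + creation v * annihilation w) := by
          simp only [majoranaC, majoranaD, add_mul, mul_add, sub_mul, mul_sub]; abel
    _ = 0 := by
      simp only [creation_mul_creation_add, annihilation_mul_annihilation_add,
        annihilation_mul_creation_add, eq_comm (a := w)]
      abel

theorem majoranaD_mul_majoranaC (v w : Fin n) :
    majoranaD w * majoranaC v = -(majoranaC v * majoranaD w) :=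
  neg_eq_iff_eq_neg.mp (majoranaC_mul_majoranaD v w).symm

end MajoranaOperators

section MajoranaChain

variable {n : ℕ}

def edgeStart (i : Fin (n - 1)) : Fin n := ⟨i, by have := i.isLt; omega⟩

def edgeEnd (i : Fin (n - 1)) : Fin n := ⟨i + 1, by have := i.isLt; omega⟩

theorem edgeStart_injective : Function.Injective (edgeStart (n := n)) :=
  fun _ _ h => Fin.ext (Fin.mk.inj h)

theorem edgeEnd_injective : Function.Injective (edgeEnd (n := n)) :=
  fun _ _ h => Fin.ext (Nat.succ_injective (Fin.mk.inj h))

variable (t : Fin (n - 1) → ZMod 2)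

noncomputable def edgeOp (i : Fin (n - 1)) :
    Module.End ℂ (ExteriorAlgebra ℂ (Fin n → ℂ)) :=
  (-1 : ℂ) ^ (t i).val • (majoranaC (edgeEnd i) * majoranaD (edgeStart i))

theorem edgeOp_mul_self (i : Fin (n - 1)) : edgeOp t i * edgeOp t i = 1 := by
  rw [edgeOp, smul_mul_smul_comm, ← mul_pow, neg_one_mul, neg_neg, one_pow, one_smul]
  exact mul_mul_mul_self_of_anticommute (majoranaC_mul_self _) (majoranaD_mul_self _)
    (majoranaD_mul_majoranaC _ _)

theorem commute_edgeOp : Pairwise fun i j => Commute (edgeOp t i) (edgeOp t j) := by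
  intro i j hij
  refine ((Commute.mul_left ?_ ?_).smul_left _).smul_right _
  · exact commute_mul_of_anticommute (majoranaC_mul_majoranaC (edgeEnd_injective.ne hij))
      (majoranaC_mul_majoranaD _ _)
  · exact commute_mul_of_anticommute (majoranaD_mul_majoranaC _ _)
      (majoranaD_mul_majoranaD (edgeStart_injective.ne hij))

theorem majoranaC_edgeEnd_mul_edgeOp (i : Fin (n - 1)) :
    majoranaC (edgeEnd i) * edgeOp t i = -(edgeOp t i * majoranaC (edgeEnd i)) := by
  rw [edgeOp, mul_smul_comm, smul_mul_assoc,
    mul_mul_eq_neg_of_anticommute (majoranaC_mul_self _) (majoranaD_mul_majoranaC _ _)]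
  exact smul_neg _ _

theorem commute_majoranaC_edgeEnd_edgeOp :
    Pairwise fun i j => Commute (majoranaC (edgeEnd i)) (edgeOp t j) := fun _ _ hij =>
  (commute_mul_of_anticommute (majoranaC_mul_majoranaC (edgeEnd_injective.ne hij))
    (majoranaC_mul_majoranaD _ _)).smul_right _

noncomputable def edgeProj (i : Fin (n - 1)) :
    Module.End ℂ (ExteriorAlgebra ℂ (Fin n → ℂ)) :=
  (2⁻¹ : ℂ) • (1 + edgeOp t i)

theorem isIdempotentElem_edgeProj (i : Fin (n - 1)) : IsIdempotentElem (edgeProj t i) :=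
  isIdempotentElem_inv_two_smul_one_add (edgeOp_mul_self t i)

theorem commute_edgeProj : Pairwise fun i j => Commute (edgeProj t i) (edgeProj t j) :=
  fun _ _ hij => (((Commute.one_left _).add_left
    ((Commute.one_right _).add_right (commute_edgeOp t hij))).smul_left _).smul_right _

theorem majoranaC_edgeEnd_mul_edgeProj (i : Fin (n - 1)) :
    majoranaC (edgeEnd i) * edgeProj t i = (1 - edgeProj t i) * majoranaC (edgeEnd i) :=
  mul_inv_two_smul_one_add_of_anticommute (majoranaC_edgeEnd_mul_edgeOp t i)

theorem commute_majoranaC_edgeEnd_edgeProj :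
    Pairwise fun i j => Commute (majoranaC (edgeEnd i)) (edgeProj t j) := fun _ _ hij =>
  ((Commute.one_right _).add_right (commute_majoranaC_edgeEnd_edgeOp t hij)).smul_right _

theorem sum_edgeProj (hn : 1 ≤ n) :
    ∑ i, edgeProj t i = (((n : ℂ) - 1) / 2) • 1 + (1 / 2 : ℂ) • ∑ i, edgeOp t i := by
  simp only [edgeProj, smul_add, Finset.sum_add_distrib, ← Finset.smul_sum, Finset.sum_const,
    Finset.card_univ, Fintype.card_fin]
  rw [← Nat.cast_smul_eq_nsmul ℂ, Nat.cast_sub hn]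
  module

end MajoranaChain

/-- The Majorana chain Hamiltonian on a triangulated pin⁻ interval with `n ≥ 2` vertices
(and `n - 1` edges, with combinatorial pin⁻ data `t`) has all eigenvalues real and at least
`-(n-1)/2`, and its ground state eigenspace (eigenvalue `-(n-1)/2`) is two-dimensional. -/
theorem majorana_chain_interval_ground_state
    (n : ℕ) (hn : 2 ≤ n) (t : Fin (n - 1) → ZMod 2)
    (H : Module.End ℂ (ExteriorAlgebra ℂ (Fin n → ℂ)))
    (hH : H = (1/2 : ℂ) • ∑ i : Fin (n - 1),
      ((-1 : ℂ) ^ (t i).val) •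
        (majoranaC (⟨i.val + 1, by have := i.isLt; omega⟩ : Fin n) ∘ₗ
          majoranaD (⟨i.val, by have := i.isLt; omega⟩ : Fin n))) :
    (∀ μ : ℂ, H.HasEigenvalue μ → μ.im = 0 ∧ -((n : ℝ) - 1)/2 ≤ μ.re) ∧
    Module.finrank ℂ (Module.End.eigenspace H (-((n : ℂ) - 1)/2)) = 2 := by
  have hHP : H = ∑ i, edgeProj t i - (((n : ℂ) - 1) / 2) • 1 := by
    rw [sum_edgeProj t (by omega), add_sub_cancel_left]
    exact hH
  have heig (μ : ℂ) :
      H.eigenspace μ = (∑ i, edgeProj t i).eigenspace (μ + ((n : ℂ) - 1) / 2) := by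
    rw [hHP, Module.End.eigenspace_sub_smul_one]
  refine ⟨fun μ hμ => ?_, ?_⟩
  · obtain ⟨x, hx⟩ := hμ.exists_hasEigenvector
    rw [Module.End.hasEigenvector_iff, heig, Module.End.mem_eigenspace_iff] at hx
    obtain ⟨m, -, hm⟩ := exists_eq_natCast_of_sum_apply_eq_smul (isIdempotentElem_edgeProj t)
      (commute_edgeProj t) Finset.univ hx.1 hx.2
    have hμm : μ = ((m - ((n : ℝ) - 1) / 2 : ℝ) : ℂ) := by
      push_cast; linear_combination hm
    rw [hμm, Complex.ofReal_im, Complex.ofReal_re]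
    exact ⟨rfl, by linarith [m.cast_nonneg (α := ℝ)]⟩
  · rw [heig, neg_div, neg_add_cancel, Module.End.eigenspace_zero,
      ker_sum_eq_iInf_ker (isIdempotentElem_edgeProj t) (commute_edgeProj t)]
    have h := finrank_iInf_ker_mul_two_pow (isIdempotentElem_edgeProj t) (commute_edgeProj t)
      (fun i => majoranaC_mul_self (edgeEnd i)) (majoranaC_edgeEnd_mul_edgeProj t)
      (commute_majoranaC_edgeEnd_edgeProj t) Finset.univ
    have hpow : 2 ^ n = 2 ^ (n - 1) * 2 := by rw [← pow_succ, Nat.sub_add_cancel (by omega)]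
    rw [Finset.card_univ, Fintype.card_fin, ExteriorAlgebra.finrank_pi, Fintype.card_fin, hpow] at h
    exact Nat.eq_of_mul_eq_mul_left (by positivity) ((mul_comm _ _).trans h)
end
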